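/- Let ρ be a density operator on a finite-dimensional Hilbert space H_A with purification Ψ_{RA} (a pure state on H_R ⊗ H_A whose partial trace over R equals ρ). For any two POVMs M = {Λ_x}_{x∈𝒳} and M̃ = {Λ̃_x}_{x∈𝒳} on H_A, the trace distance between the classical–quantum post-measurement states satisfies ‖(id ⊗ M)(Ψ_{RA}) − (id ⊗ M̃)(Ψ_{RA})‖₁ = Σ_x ‖√ρ (Λ_x − Λ̃_x) √ρ‖₁, where (id ⊗ M)(Ψ_{RA}) := Σ_x |x⟩⟨x| ⊗ Tr_A{(I_R ⊗ Λ_x)Ψ_{RA}}. -/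

import Mathlib

open Matrix Kronecker BigOperators
open scoped ComplexOrder

/-- The positive semidefinite square root of a positive semidefinite matrix (as in the older Mathlib). -/
noncomputable def Matrix.PosSemidef.sqrt {n 𝕜 : Type*} [Fintype n] [DecidableEq n] [RCLike 𝕜]
    {A : Matrix n n 𝕜} (hA : A.PosSemidef) : Matrix n n 𝕜 :=
  hA.1.eigenvectorUnitary.1 * diagonal ((↑) ∘ (√·) ∘ hA.1.eigenvalues) *
  (star hA.1.eigenvectorUnitary : Matrix n n 𝕜)

noncomputable def traceNorm {n : Type*} [Fintype n] [DecidableEq n] (A : Matrix n n ℂ) : ℝ :=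
  ((Matrix.posSemidef_conjTranspose_mul_self A).sqrt).trace.re

noncomputable def opNorm {n : Type*} [Fintype n] [DecidableEq n] (A : Matrix n n ℂ) : ℝ :=
  ‖Matrix.toEuclideanCLM (𝕜 := ℂ) A‖

noncomputable def ptraceLeft {r a : Type*} [Fintype r] (M : Matrix (r × a) (r × a) ℂ) : Matrix a a ℂ :=
  Matrix.of fun i j => ∑ k, M (k, i) (k, j)

noncomputable def ptraceRight {r a : Type*} [Fintype a] (M : Matrix (r × a) (r × a) ℂ) : Matrix r r ℂ :=
  Matrix.of fun i j => ∑ k, M (i, k) (j, k)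

noncomputable def vN {n : Type*} [Fintype n] [DecidableEq n] (ρ : Matrix n n ℂ) : ℝ :=
  if h : ρ.IsHermitian then -∑ i, (h.eigenvalues i) * Real.logb 2 (h.eigenvalues i) else 0

/-- The classical–quantum post-measurement state Σ_x |x⟩⟨x| ⊗ Tr_A{(I_R ⊗ Λ_x)Ψ}. -/
noncomputable def cqState {r a X : Type*} [Fintype r] [DecidableEq r] [Fintype a] [DecidableEq X]
    (M : X → Matrix a a ℂ) (Ψ : Matrix (r × a) (r × a) ℂ) : Matrix (X × r) (X × r) ℂ :=
  Matrix.of fun p q =>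
    if p.1 = q.1 then ptraceRight (((1 : Matrix r r ℂ) ⊗ₖ M p.1) * Ψ) p.2 q.2 else 0

/-!
Write `Ψ = |ψ⟩⟨ψ|` and let `V = coeffMatrix ψ`, the matrix `V k i = ψ (i, k)`, so that
`ρ = V Vᴴ`. The `x`-th block of the cq-state is `(Vᴴ Λ_x V)ᵀ`; after reordering the index
`X × r` to `r × X`, the difference of the two cq-states is block diagonal, and its trace norm is
`∑ x ‖Vᴴ (Λ_x - Λ̃_x) V‖₁`.

It remains to see `‖Vᴴ A V‖₁ = ‖√ρ A √ρ‖₁` for every `A`. Put `Y = Vᴴ A √ρ`; since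
`V Vᴴ = √ρ √ρ`, we get `(Vᴴ A V)(Vᴴ A V)ᴴ = Y Yᴴ` and `(√ρ A √ρ)ᴴ(√ρ A √ρ) = Yᴴ Y`. Finally
`tr √(Y Yᴴ) = tr √(Yᴴ Y)`: on the joint spectrum `√x = x g(x)` for a polynomial `g`, and
`g(Y Yᴴ) Y = Y g(Yᴴ Y)`, so both traces equal `tr (Yᴴ g(Y Yᴴ) Y)`.
-/

open Polynomial in
lemma Polynomial.exists_mul_eval_eq_on_finite {s : Set ℝ} (hs : s.Finite) (f : ℝ → ℝ)
    (hf : f 0 = 0) : ∃ g : ℝ[X], ∀ x ∈ s, x * g.eval x = f x := by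
  refine ⟨Lagrange.interpolate hs.toFinset id (fun x => f x / x), fun x hx => ?_⟩
  have hnode := Lagrange.eval_interpolate_at_node (fun x => f x / x) (Set.injOn_id _)
    (hs.mem_toFinset.mpr hx)
  rw [id] at hnode
  rw [hnode]
  rcases eq_or_ne x 0 with rfl | hx0
  · simp [hf]
  · exact mul_div_cancel₀ _ hx0

namespace Matrix

variable {𝕜 : Type*} [RCLike 𝕜] {m n : Type*} [Fintype m] [Fintype n]

lemma trace_submatrix_equiv {R : Type*} [AddCommMonoid R] (A : Matrix n n R) (e : m ≃ n) :
    (A.submatrix e e).trace = A.trace :=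
  e.sum_comp fun i => A i i

variable [DecidableEq m] [DecidableEq n]

section Polynomial

open Polynomial

lemma mul_pow_mul_comm {R : Type*} [Semiring R] (Y : Matrix m n R) (B : Matrix n m R) (k : ℕ) :
    (Y * B) ^ k * Y = Y * (B * Y) ^ k := by
  induction k with
  | zero => simp
  | succ k ih =>
    rw [pow_succ, pow_succ, Matrix.mul_assoc, Matrix.mul_assoc, ← Matrix.mul_assoc _ Y, ih,
      Matrix.mul_assoc]

lemma aeval_mul_comm_mul {R S : Type*} [CommSemiring R] [Semiring S] [Algebra R S]
    (Y : Matrix m n S) (B : Matrix n m S) (p : R[X]) :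
    aeval (Y * B) p * Y = Y * aeval (B * Y) p := by
  induction p using Polynomial.induction_on' with
  | add p q hp hq => simp only [map_add, Matrix.add_mul, Matrix.mul_add, hp, hq]
  | monomial k c =>
    simp only [aeval_monomial, Algebra.algebraMap_eq_smul_one, Matrix.smul_mul, Matrix.mul_smul,
      Matrix.one_mul, mul_pow_mul_comm]

lemma IsHermitian.cfc_eq_mul_aeval {A : Matrix n n 𝕜} (hA : A.IsHermitian) {f : ℝ → ℝ}
    {g : ℝ[X]} (hg : ∀ x ∈ spectrum ℝ A, x * g.eval x = f x) : cfc f A = A * aeval A g := by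
  rw [← cfc_congr hg, cfc_mul _ _ A (by fun_prop) (by fun_prop),
    cfc_id' ℝ A hA.isSelfAdjoint, cfc_polynomial g A hA.isSelfAdjoint]

theorem trace_cfc_self_mul_conjTranspose (Y : Matrix m n 𝕜) {f : ℝ → ℝ} (hf : f 0 = 0) :
    (cfc f (Y * Yᴴ)).trace = (cfc f (Yᴴ * Y)).trace := by
  obtain ⟨g, hg⟩ := Polynomial.exists_mul_eval_eq_on_finite
    ((Y * Yᴴ).finite_real_spectrum.union (Yᴴ * Y).finite_real_spectrum) f hf
  rw [(isHermitian_mul_conjTranspose_self Y).cfc_eq_mul_aeval fun x hx => hg x (.inl hx),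
    (isHermitian_conjTranspose_mul_self Y).cfc_eq_mul_aeval fun x hx => hg x (.inr hx)]
  calc (Y * Yᴴ * aeval (Y * Yᴴ) g).trace = (Yᴴ * (aeval (Y * Yᴴ) g * Y)).trace := by
        rw [Matrix.mul_assoc, trace_mul_comm, Matrix.mul_assoc]
    _ = (Yᴴ * Y * aeval (Yᴴ * Y) g).trace := by
        rw [aeval_mul_comm_mul, Matrix.mul_assoc]

end Polynomial

section Order

open scoped MatrixOrder

theorem trace_sqrt_self_mul_conjTranspose (Y : Matrix m n 𝕜) :
    (CFC.sqrt (Y * Yᴴ)).trace = (CFC.sqrt (Yᴴ * Y)).trace := by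
  rw [CFC.sqrt_eq_real_sqrt _ (posSemidef_self_mul_conjTranspose Y).nonneg,
    CFC.sqrt_eq_real_sqrt _ (posSemidef_conjTranspose_mul_self Y).nonneg,
    cfcₙ_eq_cfc, cfcₙ_eq_cfc]
  exact trace_cfc_self_mul_conjTranspose Y Real.sqrt_zero

lemma PosSemidef.sqrt_eq_cfcSqrt {A : Matrix n n 𝕜} (hA : A.PosSemidef) :
    hA.sqrt = CFC.sqrt A := by
  rw [CFC.sqrt_eq_cfc, cfc_nnreal_eq_real _ A, hA.1.cfc_eq]
  simp only [IsHermitian.cfc, PosSemidef.sqrt, Unitary.conjStarAlgAut_apply]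
  congr 3
  funext i
  simp [Real.coe_toNNReal', max_eq_left (hA.eigenvalues_nonneg i)]

lemma PosSemidef.sqrt_mul_self {A : Matrix n n 𝕜} (hA : A.PosSemidef) :
    hA.sqrt * hA.sqrt = A := by
  rw [hA.sqrt_eq_cfcSqrt, CFC.sqrt_mul_sqrt_self A hA.nonneg]

lemma PosSemidef.conjTranspose_sqrt {A : Matrix n n 𝕜} (hA : A.PosSemidef) :
    hA.sqrtᴴ = hA.sqrt := by
  rw [hA.sqrt_eq_cfcSqrt]
  exact (CFC.sqrt_nonneg A).isSelfAdjoint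

lemma sqrt_transpose {A : Matrix n n 𝕜} (hA : 0 ≤ A) : CFC.sqrt Aᵀ = (CFC.sqrt A)ᵀ :=
  CFC.sqrt_unique (by rw [← transpose_mul, CFC.sqrt_mul_sqrt_self A])
    (CFC.sqrt_nonneg A).posSemidef.transpose.nonneg

lemma sqrt_submatrix_equiv {A : Matrix n n 𝕜} (hA : 0 ≤ A) (e : m ≃ n) :
    CFC.sqrt (A.submatrix e e) = (CFC.sqrt A).submatrix e e :=
  CFC.sqrt_unique (by rw [submatrix_mul_equiv, CFC.sqrt_mul_sqrt_self A])
    ((CFC.sqrt_nonneg A).posSemidef.submatrix e).nonneg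

variable {o : Type*} [Fintype o] [DecidableEq o]

lemma blockDiagonal_nonneg {A : o → Matrix n n 𝕜} (hA : ∀ x, 0 ≤ A x) :
    0 ≤ blockDiagonal A := by
  have hsq : blockDiagonal A = star (blockDiagonal fun x => CFC.sqrt (A x)) *
      blockDiagonal fun x => CFC.sqrt (A x) := by
    rw [star_eq_conjTranspose, blockDiagonal_conjTranspose, ← blockDiagonal_mul]
    refine congrArg _ (funext fun x => ?_)
    rw [← star_eq_conjTranspose, (CFC.sqrt_nonneg (A x)).isSelfAdjoint.star_eq,
      CFC.sqrt_mul_sqrt_self (A x) (hA x)]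
  rw [hsq]
  exact star_mul_self_nonneg _

lemma sqrt_blockDiagonal {A : o → Matrix n n 𝕜} (hA : ∀ x, 0 ≤ A x) :
    CFC.sqrt (blockDiagonal A) = blockDiagonal fun x => CFC.sqrt (A x) := by
  refine CFC.sqrt_unique ?_ (blockDiagonal_nonneg fun x => CFC.sqrt_nonneg (A x))
  rw [← blockDiagonal_mul]
  exact congrArg _ (funext fun x => CFC.sqrt_mul_sqrt_self _ (hA x))

end Order

end Matrix

section TraceNorm

open scoped MatrixOrder

variable {m n : Type*} [Fintype m] [DecidableEq m] [Fintype n] [DecidableEq n]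

lemma traceNorm_eq_re_trace_sqrt (A : Matrix n n ℂ) :
    traceNorm A = (CFC.sqrt (Aᴴ * A)).trace.re := by
  rw [traceNorm, PosSemidef.sqrt_eq_cfcSqrt]

lemma traceNorm_eq_re_trace_sqrt_self_mul_conjTranspose (A : Matrix n n ℂ) :
    traceNorm A = (CFC.sqrt (A * Aᴴ)).trace.re := by
  rw [traceNorm_eq_re_trace_sqrt, trace_sqrt_self_mul_conjTranspose]

lemma traceNorm_transpose (A : Matrix n n ℂ) : traceNorm Aᵀ = traceNorm A := by
  rw [traceNorm_eq_re_trace_sqrt, traceNorm_eq_re_trace_sqrt_self_mul_conjTranspose,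
    conjTranspose_transpose_eq_transpose_conjTranspose, ← transpose_mul,
    sqrt_transpose (posSemidef_self_mul_conjTranspose A).nonneg, trace_transpose]

lemma traceNorm_submatrix_equiv (A : Matrix n n ℂ) (e : m ≃ n) :
    traceNorm (A.submatrix e e) = traceNorm A := by
  rw [traceNorm_eq_re_trace_sqrt, traceNorm_eq_re_trace_sqrt, conjTranspose_submatrix,
    submatrix_mul_equiv, sqrt_submatrix_equiv (posSemidef_conjTranspose_mul_self A).nonneg,
    trace_submatrix_equiv]

lemma traceNorm_blockDiagonal {o : Type*} [Fintype o] [DecidableEq o] (A : o → Matrix n n ℂ) :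
    traceNorm (blockDiagonal A) = ∑ x, traceNorm (A x) := by
  simp only [traceNorm_eq_re_trace_sqrt, blockDiagonal_conjTranspose, ← blockDiagonal_mul]
  rw [sqrt_blockDiagonal fun x => (posSemidef_conjTranspose_mul_self (A x)).nonneg,
    trace_blockDiagonal, Complex.re_sum]

lemma traceNorm_conjTranspose_mul_mul (V : Matrix n m ℂ) {S : Matrix n n ℂ} (hS : Sᴴ = S)
    (hV : V * Vᴴ = S * S) (A : Matrix n n ℂ) :
    traceNorm (Vᴴ * A * V) = traceNorm (S * A * S) := by
  have hleft : Vᴴ * A * V * (Vᴴ * A * V)ᴴ = Vᴴ * A * S * (Vᴴ * A * S)ᴴ := by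
    simp only [conjTranspose_mul, conjTranspose_conjTranspose, hS, Matrix.mul_assoc]
    rw [← Matrix.mul_assoc V Vᴴ, hV, ← Matrix.mul_assoc S S]
  have hright : (S * A * S)ᴴ * (S * A * S) = (Vᴴ * A * S)ᴴ * (Vᴴ * A * S) := by
    simp only [conjTranspose_mul, conjTranspose_conjTranspose, hS, Matrix.mul_assoc]
    rw [← Matrix.mul_assoc V Vᴴ, hV, ← Matrix.mul_assoc S S]
  rw [traceNorm_eq_re_trace_sqrt_self_mul_conjTranspose, hleft,
    trace_sqrt_self_mul_conjTranspose, ← hright, ← traceNorm_eq_re_trace_sqrt]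

end TraceNorm

section PureState

variable {r a : Type*} [Fintype r]

def coeffMatrix (ψ : r × a → ℂ) : Matrix a r ℂ :=
  of fun k i => ψ (i, k)

lemma ptraceLeft_vecMulVec_star (ψ : r × a → ℂ) :
    ptraceLeft (vecMulVec ψ (star ψ)) = coeffMatrix ψ * (coeffMatrix ψ)ᴴ := by
  ext k l
  simp [ptraceLeft, coeffMatrix, mul_apply, vecMulVec_apply]

variable [Fintype a] [DecidableEq r] {X : Type*} [DecidableEq X]

lemma ptraceRight_one_kronecker_mul_vecMulVec_star (ψ : r × a → ℂ) (A : Matrix a a ℂ) :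
    ptraceRight (((1 : Matrix r r ℂ) ⊗ₖ A) * vecMulVec ψ (star ψ)) =
      ((coeffMatrix ψ)ᴴ * A * coeffMatrix ψ)ᵀ := by
  ext i j
  simp only [ptraceRight, coeffMatrix, mul_apply, kroneckerMap_apply, one_apply, ite_mul,
    one_mul, zero_mul, vecMulVec_apply, Pi.star_apply, RCLike.star_def, Fintype.sum_prod_type,
    Finset.sum_ite_irrel, Finset.sum_const_zero, Finset.sum_ite_eq, Finset.mem_univ, ↓reduceIte,
    of_apply, transpose_apply, conjTranspose_apply, Finset.sum_mul]
  rw [Finset.sum_comm]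
  refine Finset.sum_congr rfl fun _ _ => Finset.sum_congr rfl fun _ _ => by ring

lemma cqState_eq_submatrix_blockDiagonal (M : X → Matrix a a ℂ)
    (Ψ : Matrix (r × a) (r × a) ℂ) :
    cqState M Ψ =
      (blockDiagonal fun x => ptraceRight (((1 : Matrix r r ℂ) ⊗ₖ M x) * Ψ)).submatrix
        (Equiv.prodComm X r) (Equiv.prodComm X r) := by
  ext ⟨x, i⟩ ⟨y, j⟩
  simp [cqState, blockDiagonal_apply]

lemma cqState_sub (M M' : X → Matrix a a ℂ) (Ψ : Matrix (r × a) (r × a) ℂ) :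
    cqState M Ψ - cqState M' Ψ = cqState (M - M') Ψ := by
  ext p q
  by_cases h : p.1 = q.1 <;>
    simp [cqState, h, ptraceRight, mul_apply, mul_sub, sub_mul, Finset.sum_sub_distrib]

end PureState

theorem cq_trace_dist_eq_sum_traceNorm_general {r a X : Type*}
    [Fintype r] [DecidableEq r] [Fintype a] [DecidableEq a] [Fintype X] [DecidableEq X]
    (ρ : Matrix a a ℂ) (hρ : ρ.PosSemidef)
    (ψ : r × a → ℂ)
    (Ψ : Matrix (r × a) (r × a) ℂ)
    (hΨ : Ψ = Matrix.of fun p q => ψ p * star (ψ q))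
    (hpur : ptraceLeft Ψ = ρ)
    (M M' : X → Matrix a a ℂ) :
    traceNorm (cqState M Ψ - cqState M' Ψ)
      = ∑ x, traceNorm (hρ.sqrt * (M x - M' x) * hρ.sqrt) := by
  obtain rfl : Ψ = vecMulVec ψ (star ψ) := hΨ
  have hV : coeffMatrix ψ * (coeffMatrix ψ)ᴴ = hρ.sqrt * hρ.sqrt := by
    rw [hρ.sqrt_mul_self, ← hpur, ptraceLeft_vecMulVec_star]
  rw [cqState_sub, cqState_eq_submatrix_blockDiagonal, traceNorm_submatrix_equiv,
    traceNorm_blockDiagonal]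
  refine Finset.sum_congr rfl fun x _ => ?_
  rw [ptraceRight_one_kronecker_mul_vecMulVec_star, traceNorm_transpose,
    traceNorm_conjTranspose_mul_mul _ hρ.conjTranspose_sqrt hV, Pi.sub_apply]

/-- Equivalence of faithful-simulation criteria (Lemma 1 of the paper):
‖(id ⊗ M)(Ψ) − (id ⊗ M̃)(Ψ)‖₁ = Σ_x ‖√ρ(Λ_x − Λ̃_x)√ρ‖₁ for any purification Ψ of ρ. -/
theorem cq_trace_dist_eq_sum_traceNorm {r a X : Type*}
    [Fintype r] [DecidableEq r] [Fintype a] [DecidableEq a] [Fintype X] [DecidableEq X]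
    (ρ : Matrix a a ℂ) (hρ : ρ.PosSemidef)
    (ψ : r × a → ℂ) (hψ : ∑ p, Complex.normSq (ψ p) = 1)
    (Ψ : Matrix (r × a) (r × a) ℂ)
    (hΨ : Ψ = Matrix.of fun p q => ψ p * star (ψ q))
    (hpur : ptraceLeft Ψ = ρ)
    (M M' : X → Matrix a a ℂ)
    (hM : ∀ x, (M x).PosSemidef) (hM' : ∀ x, (M' x).PosSemidef)
    (hMsum : ∑ x, M x = 1) (hM'sum : ∑ x, M' x = 1) :
    traceNorm (cqState M Ψ - cqState M' Ψ)
      = ∑ x, traceNorm (hρ.sqrt * (M x - M' x) * hρ.sqrt) :=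
  cq_trace_dist_eq_sum_traceNorm_general ρ hρ ψ Ψ hΨ hpur M M'
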